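/- arXiv:1002.4829 — 14 statements merged into one kernel-verified Lean document; each statement's English description precedes it below -/
import Mathlib

section
/- Let k be a field of characteristic zero. If π ∈ k[T] is an irreducible polynomial dividing f_n = f^n - g^n for some n ≥ 1, then for every m ≥ 1 one has ord_π(f^{mn} - g^{mn}) = ord_π(f^n - g^n). -/
/-! Since `π` divides `x - y` for `x = f ^ n`, `y = g ^ n`, and `f`, `g` are coprime, `π` does not
divide `x`. In the factorisation `x ^ m - y ^ m = (∑ xⁱ yᵐ⁻¹⁻ⁱ) (x - y)` the first factor is
`m xᵐ⁻¹` modulo `π`, which is non-zero because `m` is a unit in characteristic zero; so the whole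
`π`-adic valuation of `x ^ m - y ^ m` comes from `x - y`. -/

open Polynomial

theorem not_dvd_left_of_isCoprime_of_dvd_sub {R : Type*} [CommRing R] {p x y : R}
    (hp : ¬IsUnit p) (hxy : IsCoprime x y) (h : p ∣ x - y) : ¬p ∣ x := fun hx =>
  hp <| hxy.isUnit_of_dvd' hx <| by simpa using dvd_sub hx h

theorem isUnit_natCast_of_ne_zero {K A : Type*} [Field K] [CharZero K] [Ring A] [Algebra K A]
    {m : ℕ} (hm : m ≠ 0) : IsUnit (m : A) := by
  simpa using (IsUnit.mk0 (m : K) (Nat.cast_ne_zero.mpr hm)).map (algebraMap K A)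

theorem stmt_1_general {k : Type*} [Field k] [CharZero k]
    (f g : Polynomial k) (hfg : IsCoprime f g)
    (π : Polynomial k) (hπ : Irreducible π)
    (n : ℕ) (hdvd : π ∣ f ^ n - g ^ n) :
    ∀ m : ℕ, 1 ≤ m →
      multiplicity π (f ^ (m * n) - g ^ (m * n)) = multiplicity π (f ^ n - g ^ n) := by
  intro m hm
  have hπf : ¬π ∣ f ^ n :=
    not_dvd_left_of_isCoprime_of_dvd_sub hπ.not_isUnit hfg.pow hdvd
  have hπm : ¬π ∣ (m : k[X]) := fun h =>
    hπ.not_isUnit (isUnit_of_dvd_unit h (isUnit_natCast_of_ne_zero (K := k) (by omega)))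
  rw [mul_comm, pow_mul, pow_mul]
  exact multiplicity_eq_of_emultiplicity_eq
    (emultiplicity_pow_sub_pow_of_prime hπ.prime hdvd hπf hπm)

/-- Lemma 1.1 (characteristic zero): if `π` is an irreducible dividing
`f^n - g^n`, then `ord_π (f^(m*n) - g^(m*n)) = ord_π (f^n - g^n)`. -/
theorem stmt_1 {k : Type*} [Field k] [CharZero k]
    (f g : Polynomial k) (hf : f ≠ 0) (hg : g ≠ 0) (hfg : IsCoprime f g)
    (π : Polynomial k) (hπ : Irreducible π)
    (n : ℕ) (hn : 1 ≤ n) (hdvd : π ∣ f ^ n - g ^ n) :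
    ∀ m : ℕ, 1 ≤ m →
      multiplicity π (f ^ (m * n) - g ^ (m * n)) = multiplicity π (f ^ n - g ^ n) :=
  stmt_1_general f g hfg π hπ n hdvd
end

section
/- Let k be a field whose characteristic is not 2. Then the sequence f_n = f^n - g^n is a strong divisibility sequence: for all r, s ≥ 1, gcd(f_r, f_s) is associated (equal up to a unit of k) to f_{gcd(r,s)} in k[T]. -/
open scoped Classical

private lemma coprime_sub_pow {k : Type*} [Field k] {f g : Polynomial k}
    (hfg : IsCoprime f g) (s : ℕ) : IsCoprime (f ^ s - g ^ s) (g ^ s) := by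
  have h : IsCoprime (f ^ s) (g ^ s) := hfg.pow
  have := h.add_mul_left_left (-1)
  simpa [mul_neg_one, sub_eq_add_neg] using this

private lemma step_lemma {k : Type*} [Field k] {f g : Polynomial k}
    (hfg : IsCoprime f g) {r s : ℕ} (hs : s ≤ r) :
    Associated (EuclideanDomain.gcd (f ^ r - g ^ r) (f ^ s - g ^ s))
      (EuclideanDomain.gcd (f ^ (r - s) - g ^ (r - s)) (f ^ s - g ^ s)) := by
  have h1 : f ^ (r - s) * f ^ s = f ^ r := by rw [← pow_add, Nat.sub_add_cancel hs]
  have h2 : g ^ s * g ^ (r - s) = g ^ r := by rw [← pow_add, Nat.add_sub_cancel' hs]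
  have key : f ^ r - g ^ r
      = f ^ (r - s) * (f ^ s - g ^ s) + g ^ s * (f ^ (r - s) - g ^ (r - s)) := by
    linear_combination h2 - h1
  apply associated_of_dvd_dvd
  · apply EuclideanDomain.dvd_gcd
    · -- gcd ∣ g^s * A, and gcd coprime to g^s
      have hd1 : EuclideanDomain.gcd (f ^ r - g ^ r) (f ^ s - g ^ s) ∣
          g ^ s * (f ^ (r - s) - g ^ (r - s)) := by
        have : g ^ s * (f ^ (r - s) - g ^ (r - s))
            = (f ^ r - g ^ r) - f ^ (r - s) * (f ^ s - g ^ s) := by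
          linear_combination key + 2*h1 - 2*h2
        rw [this]
        exact dvd_sub (EuclideanDomain.gcd_dvd_left _ _)
          ((EuclideanDomain.gcd_dvd_right _ _).mul_left _)
      have hco : IsCoprime (EuclideanDomain.gcd (f ^ r - g ^ r) (f ^ s - g ^ s)) (g ^ s) :=
        (coprime_sub_pow hfg s).of_isCoprime_of_dvd_left (EuclideanDomain.gcd_dvd_right _ _)
      exact hco.dvd_of_dvd_mul_left hd1
    · exact EuclideanDomain.gcd_dvd_right _ _
  · apply EuclideanDomain.dvd_gcd
    · rw [key]
      exact dvd_add ((EuclideanDomain.gcd_dvd_right _ _).mul_left _)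
        ((EuclideanDomain.gcd_dvd_left _ _).mul_left _)
    · exact EuclideanDomain.gcd_dvd_right _ _

private lemma gcd_comm_assoc {k : Type*} [Field k] (a b : Polynomial k) :
    Associated (EuclideanDomain.gcd a b) (EuclideanDomain.gcd b a) :=
  associated_of_dvd_dvd
    (EuclideanDomain.dvd_gcd (EuclideanDomain.gcd_dvd_right _ _)
      (EuclideanDomain.gcd_dvd_left _ _))
    (EuclideanDomain.dvd_gcd (EuclideanDomain.gcd_dvd_right _ _)
      (EuclideanDomain.gcd_dvd_left _ _))

private lemma key_lemma {k : Type*} [Field k] {f g : Polynomial k}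
    (hfg : IsCoprime f g) :
    ∀ n r s : ℕ, r + s ≤ n →
      Associated (EuclideanDomain.gcd (f ^ r - g ^ r) (f ^ s - g ^ s))
        (f ^ (Nat.gcd r s) - g ^ (Nat.gcd r s)) := by
  intro n
  induction n with
  | zero =>
    intro r s h
    obtain ⟨rfl, rfl⟩ : r = 0 ∧ s = 0 := by omega
    simp [EuclideanDomain.gcd_zero_left]
  | succ n ih =>
    intro r s h
    rcases Nat.eq_zero_or_pos s with rfl | hs
    · rw [Nat.gcd_zero_right]
      simp only [pow_zero, sub_self]
      exact associated_of_dvd_dvd (EuclideanDomain.gcd_dvd_left _ _)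
        (EuclideanDomain.dvd_gcd dvd_rfl (dvd_zero _))
    rcases Nat.eq_zero_or_pos r with rfl | hr
    · rw [Nat.gcd_zero_left]
      simp only [pow_zero, sub_self]
      rw [EuclideanDomain.gcd_zero_left]
    rcases le_total s r with hle | hle
    · have h1 := step_lemma hfg hle
      have h2 := ih (r - s) s (by omega)
      have h3 : Nat.gcd (r - s) s = Nat.gcd r s := Nat.gcd_sub_self_left hle
      exact h1.trans (h3 ▸ h2)
    · have h1 := step_lemma hfg hle
      have h2 := ih (s - r) r (by omega)
      have h3 : Nat.gcd (s - r) r = Nat.gcd r s := by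
        rw [Nat.gcd_sub_self_left hle, Nat.gcd_comm]
      exact (gcd_comm_assoc _ _).trans (h1.trans (h3 ▸ h2))

/-- Lemma 1.2: in characteristic different from 2, `(f^n - g^n)` is a strong
divisibility sequence. -/
theorem stmt_2 {k : Type*} [Field k] (hchar : ringChar k ≠ 2)
    (f g : Polynomial k) (hf : f ≠ 0) (hg : g ≠ 0) (hfg : IsCoprime f g) :
    ∀ r s : ℕ, 1 ≤ r → 1 ≤ s →
      Associated (EuclideanDomain.gcd (f ^ r - g ^ r) (f ^ s - g ^ s))
        (f ^ (Nat.gcd r s) - g ^ (Nat.gcd r s)) := by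
  intro r s _ _
  exact key_lemma hfg (r + s) r s le_rfl
end

section
/- Let k be a field of odd characteristic p, and let f, g ∈ k[T] be non-zero coprime polynomials, not both constant. Then for every n > 2 with p ∤ n, the polynomial f_n = f^n - g^n has a primitive prime divisor: there is an irreducible π ∈ k[T] with π ∣ f_n and π ∤ f_m for all 1 ≤ m < n. -/
/-!
Write `Φₙ(X, Y) = Y^φ(n) Φₙ(X / Y)` for the homogenized cyclotomic polynomial, so that
`f^n - g^n = ∏_{d ∣ n} Φ_d(f, g)`. Every irreducible factor `π` of `Φₙ(f, g)` is primitive: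
coprimality gives `π ∤ g`, so in the residue field `k[T]/(π)` the ratio `f/g` is a root of `Φₙ`,
hence (as `p ∤ n`) a primitive `n`-th root of unity, and `π ∣ f^m - g^m` would force `n ∣ m`.
Such a `π` exists because `Φₙ(f, g)` is not a unit: over `k̄` it factors as `∏ (f - μ g)` over the
`φ(n) ≥ 2` primitive roots `μ`, and if two of these factors were constant, so would be `f` and `g`.
-/

open Polynomial

noncomputable def homogenizedCyclotomic (n : ℕ) (R : Type*) [CommRing R] :
    MvPolynomial (Fin 2) R :=
  (cyclotomic n R).homogenize n.totient

section CommRing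

variable {R S : Type*} [CommRing R] [CommRing S] (n : ℕ)

lemma map_homogenizedCyclotomic (φ : R →+* S) :
    MvPolynomial.map φ (homogenizedCyclotomic n R) = homogenizedCyclotomic n S := by
  rw [homogenizedCyclotomic, homogenizedCyclotomic, ← homogenize_map, map_cyclotomic]

lemma map_eval_homogenizedCyclotomic (φ : R →+* S) (a b : R) :
    φ (MvPolynomial.eval ![a, b] (homogenizedCyclotomic n R)) =
      MvPolynomial.eval ![φ a, φ b] (homogenizedCyclotomic n S) := by
  rw [← map_homogenizedCyclotomic n φ, MvPolynomial.eval_map, MvPolynomial.eval,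
    MvPolynomial.coe_eval₂Hom, MvPolynomial.eval₂_comp_left]
  congr 1
  ext i
  fin_cases i <;> rfl

lemma prod_homogenizedCyclotomic {n : ℕ} (hn : 0 < n) :
    ∏ d ∈ n.divisors, homogenizedCyclotomic d R = .X 0 ^ n - .X 1 ^ n := by
  have hprod := homogenize_finsetProd (s := n.divisors) (p := fun d => cyclotomic d R)
    (n := Nat.totient) fun _ _ => natDegree_cyclotomic_le
  rw [Nat.sum_totient, prod_cyclotomic_eq_X_pow_sub_one hn] at hprod
  simp [homogenizedCyclotomic, ← hprod]

lemma eval_homogenizedCyclotomic_dvd (a b : R) :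
    MvPolynomial.eval ![a, b] (homogenizedCyclotomic n R) ∣ a ^ n - b ^ n := by
  rcases n.eq_zero_or_pos with rfl | hn
  · simp
  · have := congrArg (MvPolynomial.eval ![a, b]) (prod_homogenizedCyclotomic (R := R) hn)
    simp only [map_prod, map_sub, map_pow, MvPolynomial.eval_X, Matrix.cons_val_zero,
      Matrix.cons_val_one] at this
    rw [← this]
    exact Finset.dvd_prod_of_mem _ (Nat.mem_divisors_self n hn.ne')

end CommRing

lemma homogenizedCyclotomic_eq_prod {R : Type*} [CommRing R] [IsDomain R] {ζ : R} {n : ℕ}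
    (hζ : IsPrimitiveRoot ζ n) :
    homogenizedCyclotomic n R = ∏ μ ∈ primitiveRoots n R, (.X 0 - .C μ * .X 1) := by
  have hprod := homogenize_finsetProd (s := primitiveRoots n R) (p := fun μ => X - C μ)
    (n := fun _ => 1) fun μ _ => (natDegree_X_sub_C μ).le
  rw [← Finset.card_eq_sum_ones, hζ.card_primitiveRoots,
    ← cyclotomic_eq_prod_X_sub_primitiveRoots hζ] at hprod
  rw [homogenizedCyclotomic, hprod]
  refine Finset.prod_congr rfl fun μ _ => ?_
  rw [homogenize_sub, homogenize_X one_ne_zero, homogenize_C]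
  simp

lemma isPrimitiveRoot_div_of_eval_homogenizedCyclotomic_eq_zero {K : Type*} [Field K] {n : ℕ}
    [NeZero (n : K)] {a b : K} (hb : b ≠ 0)
    (h : MvPolynomial.eval ![a, b] (homogenizedCyclotomic n K) = 0) :
    IsPrimitiveRoot (a / b) n := by
  rw [homogenizedCyclotomic, eval_homogenize natDegree_cyclotomic_le _ (by simpa using hb)] at h
  simp only [Matrix.cons_val_zero, Matrix.cons_val_one, Matrix.cons_val_fin_one] at h
  exact isRoot_cyclotomic_iff.mp ((mul_eq_zero.mp h).resolve_right (pow_ne_zero _ hb))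

lemma not_dvd_pow_sub_pow_of_dvd_eval_homogenizedCyclotomic {R : Type*} [CommRing R] [IsDomain R]
    [IsPrincipalIdealRing R] {π a b : R} {n m : ℕ} (hπ : Irreducible π) (hn : ¬ π ∣ (n : R))
    (hb : ¬ π ∣ b) (hΦ : π ∣ MvPolynomial.eval ![a, b] (homogenizedCyclotomic n R))
    (hm : 0 < m) (hmn : m < n) : ¬ π ∣ a ^ m - b ^ m := by
  have := PrincipalIdealRing.isMaximal_of_irreducible hπ
  let := Ideal.Quotient.field (Ideal.span {π})
  set ψ := Ideal.Quotient.mk (Ideal.span {π})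
  have hψ (x : R) : ψ x = 0 ↔ π ∣ x := Ideal.Quotient.eq_zero_iff_dvd π x
  have : NeZero (n : R ⧸ Ideal.span {π}) := ⟨by rw [← map_natCast ψ, Ne, hψ]; exact hn⟩
  have hψb : ψ b ≠ 0 := (hψ b).not.mpr hb
  have hζ : IsPrimitiveRoot (ψ a / ψ b) n := by
    refine isPrimitiveRoot_div_of_eval_homogenizedCyclotomic_eq_zero hψb ?_
    rwa [← map_eval_homogenizedCyclotomic, hψ]
  intro hπm
  have hpow : (ψ a / ψ b) ^ m = 1 := by
    rw [← hψ, map_sub, map_pow, map_pow, sub_eq_zero] at hπm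
    rw [div_pow, hπm, div_self (pow_ne_zero _ hψb)]
  exact hmn.not_ge (Nat.le_of_dvd hm ((hζ.pow_eq_one_iff_dvd m).mp hpow))

lemma natDegree_eq_zero_of_isUnit_sub_C_mul {L : Type*} [Field L] {F G : L[X]} {μ ν : L}
    (hμν : μ ≠ ν) (hμ : IsUnit (F - C μ * G)) (hν : IsUnit (F - C ν * G)) :
    F.natDegree = 0 ∧ G.natDegree = 0 := by
  obtain ⟨c, -, hc⟩ := Polynomial.isUnit_iff.mp hμ
  obtain ⟨d, -, hd⟩ := Polynomial.isUnit_iff.mp hν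
  have hG : G = C ((c - d) / (ν - μ)) := by
    have hdiff : C (ν - μ) * G = C (c - d) := by rw [C_sub, C_sub, hc, hd]; ring
    rw [div_eq_inv_mul, C_mul, ← hdiff, ← mul_assoc, ← C_mul,
      inv_mul_cancel₀ (sub_ne_zero.mpr hμν.symm), C_1, one_mul]
  have hF : F = C (c + μ * ((c - d) / (ν - μ))) := by
    rw [C_add, C_mul, hc, ← hG]; ring
  exact ⟨by rw [hF, natDegree_C], by rw [hG, natDegree_C]⟩

lemma not_isUnit_eval_homogenizedCyclotomic_of_isPrimitiveRoot {L : Type*} [Field L] {n : ℕ}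
    {ζ : L} (hζ : IsPrimitiveRoot ζ n) (hn : 2 < n) {F G : L[X]}
    (hFG : ¬ (F.natDegree = 0 ∧ G.natDegree = 0)) :
    ¬ IsUnit (MvPolynomial.eval ![F, G] (homogenizedCyclotomic n L[X])) := by
  rw [← map_homogenizedCyclotomic n C, homogenizedCyclotomic_eq_prod hζ]
  simp only [map_prod, map_sub, map_mul, MvPolynomial.map_X, MvPolynomial.map_C,
    MvPolynomial.eval_X, MvPolynomial.eval_C, Matrix.cons_val_zero, Matrix.cons_val_one,
    Matrix.cons_val_fin_one]
  intro hunit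
  have hcard : 1 < (primitiveRoots n L).card := by
    rw [hζ.card_primitiveRoots]
    have := Nat.totient_eq_one_iff.not.mpr (by omega : ¬ (n = 1 ∨ n = 2))
    have := Nat.totient_pos.mpr (by omega : 0 < n)
    omega
  obtain ⟨μ, hμ, ν, hν, hμν⟩ := Finset.one_lt_card.mp hcard
  exact hFG (natDegree_eq_zero_of_isUnit_sub_C_mul hμν
    (isUnit_of_dvd_unit (Finset.dvd_prod_of_mem (fun x => F - C x * G) hμ) hunit)
    (isUnit_of_dvd_unit (Finset.dvd_prod_of_mem (fun x => F - C x * G) hν) hunit))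

lemma not_isUnit_eval_homogenizedCyclotomic {k : Type*} [Field k] {n : ℕ} (hn : 2 < n)
    (hnk : (n : k) ≠ 0) {f g : k[X]} (hfg : ¬ (f.natDegree = 0 ∧ g.natDegree = 0)) :
    ¬ IsUnit (MvPolynomial.eval ![f, g] (homogenizedCyclotomic n k[X])) := by
  set ρ := algebraMap k (AlgebraicClosure k)
  have : NeZero (n : AlgebraicClosure k) :=
    ⟨by rw [← map_natCast ρ]; exact (_root_.map_ne_zero ρ).mpr hnk⟩
  obtain ⟨ζ, hζ⟩ := HasEnoughRootsOfUnity.exists_primitiveRoot (AlgebraicClosure k) n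
  intro hunit
  refine not_isUnit_eval_homogenizedCyclotomic_of_isPrimitiveRoot hζ hn
    (F := f.map ρ) (G := g.map ρ) (by simpa only [natDegree_map] using hfg) ?_
  simpa only [map_eval_homogenizedCyclotomic, coe_mapRingHom] using hunit.map (mapRingHom ρ)

lemma IsCoprime.isUnit_of_pow_eq_pow {R : Type*} [CommRing R] {a b : R} (h : IsCoprime a b)
    {n : ℕ} (hn : n ≠ 0) (hab : a ^ n = b ^ n) : IsUnit a ∧ IsUnit b :=
  ⟨h.pow_right.isUnit_of_dvd' dvd_rfl (hab ▸ dvd_pow_self a hn),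
    h.pow_left.isUnit_of_dvd' (hab.symm ▸ dvd_pow_self b hn) dvd_rfl⟩

lemma IsCoprime.not_dvd_right_of_dvd_pow_sub_pow {R : Type*} [CommRing R] {a b π : R}
    (h : IsCoprime a b) (hπ : Prime π) {n : ℕ} (hn : n ≠ 0) (hdvd : π ∣ a ^ n - b ^ n) :
    ¬ π ∣ b := fun hb =>
  hπ.not_isUnit (h.isUnit_of_dvd'
    (hπ.dvd_of_dvd_pow ((dvd_sub_left (dvd_pow hb hn)).mp hdvd)) hb)

theorem stmt_4_general {k : Type*} [Field k] (p : ℕ) [CharP k p]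
    (f g : Polynomial k) (hfg : IsCoprime f g)
    (hconst : ¬ (f.natDegree = 0 ∧ g.natDegree = 0)) :
    ∀ n : ℕ, 2 < n → ¬ p ∣ n →
      ∃ π : Polynomial k, Irreducible π ∧ π ∣ f ^ n - g ^ n ∧
        ∀ m : ℕ, 1 ≤ m → m < n → ¬ π ∣ f ^ m - g ^ m := by
  intro n hn hpn
  have hnk : (n : k) ≠ 0 := by rwa [Ne, CharP.cast_eq_zero_iff k p]
  set Φ := MvPolynomial.eval ![f, g] (homogenizedCyclotomic n k[X])
  have hΦ : Φ ∣ f ^ n - g ^ n := eval_homogenizedCyclotomic_dvd n f g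
  have hΦ0 : Φ ≠ 0 := by
    rintro hΦ0
    rw [hΦ0, zero_dvd_iff, sub_eq_zero] at hΦ
    obtain ⟨hf, hg⟩ := hfg.isUnit_of_pow_eq_pow (by omega) hΦ
    exact hconst ⟨natDegree_eq_zero_of_isUnit hf, natDegree_eq_zero_of_isUnit hg⟩
  obtain ⟨π, hπ, hπΦ⟩ :=
    WfDvdMonoid.exists_irreducible_factor (not_isUnit_eval_homogenizedCyclotomic hn hnk hconst) hΦ0
  have hπn : ¬ π ∣ (n : k[X]) := fun h =>
    hπ.not_isUnit (isUnit_of_dvd_unit h (by rw [← map_natCast C]; exact isUnit_C.mpr hnk.isUnit))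
  have hπg : ¬ π ∣ g := hfg.not_dvd_right_of_dvd_pow_sub_pow hπ.prime (by omega) (hπΦ.trans hΦ)
  exact ⟨π, hπ, hπΦ.trans hΦ, fun m hm hmn =>
    not_dvd_pow_sub_pow_of_dvd_eval_homogenizedCyclotomic hπ hπn hπg hπΦ hm hmn⟩

/-- Theorem 1.3 (odd positive characteristic): for `n > 2` not divisible by the
characteristic `p`, the polynomial `f^n - g^n` has a primitive prime divisor. -/
theorem stmt_4 {k : Type*} [Field k] (p : ℕ) (hp : p.Prime) (hodd : Odd p) [CharP k p]
    (f g : Polynomial k) (hf : f ≠ 0) (hg : g ≠ 0) (hfg : IsCoprime f g)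
    (hconst : ¬ (f.natDegree = 0 ∧ g.natDegree = 0)) :
    ∀ n : ℕ, 2 < n → ¬ p ∣ n →
      ∃ π : Polynomial k, Irreducible π ∧ π ∣ f ^ n - g ^ n ∧
        ∀ m : ℕ, 1 ≤ m → m < n → ¬ π ∣ f ^ m - g ^ m :=
  stmt_4_general p f g hfg hconst
end

section
/- Let k be a field of characteristic zero, and let f, g ∈ k[T] be non-zero coprime polynomials, not both constant. Then for every n > 2, the polynomial f_n = f^n - g^n has a primitive prime divisor: there is an irreducible π ∈ k[T] with π ∣ f_n and π ∤ f_m for all 1 ≤ m < n. -/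
/-!
Over an algebraic closure `K` of `k` pick a primitive `n`-th root of unity `ζ`. As `n > 2`,
`ζ⁻¹ ≠ ζ`, so `f - ζ g` and `f - ζ⁻¹ g` are not both constant (otherwise `f` and `g` would be).
A root `t ∈ K` of a nonconstant one has `g(t) ≠ 0` by coprimality, so `f(t) / g(t)` is again a
primitive `n`-th root of unity, and the minimal polynomial of `t` over `k` divides `f^m - g^m`
exactly when `(f(t) / g(t))^m = 1`, that is, when `n ∣ m`.
-/

open Polynomial

lemma natDegree_sub_C_mul_pos_or {K : Type*} [Field K] {F G : K[X]}
    (hFG : ¬(F.natDegree = 0 ∧ G.natDegree = 0)) {a b : K} (hab : a ≠ b) :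
    0 < (F - C a * G).natDegree ∨ 0 < (F - C b * G).natDegree := by
  by_contra! h
  obtain ⟨ha, hb⟩ : (F - C a * G).natDegree = 0 ∧ (F - C b * G).natDegree = 0 := by omega
  rw [natDegree_eq_zero] at ha hb
  obtain ⟨c, hc⟩ := ha
  obtain ⟨d, hd⟩ := hb
  have hG : G.natDegree = 0 := by
    have : C (b - a) * G = C (c - d) := by rw [map_sub, map_sub, hc, hd]; ring
    rw [← natDegree_C_mul (sub_ne_zero.mpr hab.symm), this, natDegree_C]
  obtain ⟨e, he⟩ := natDegree_eq_zero.mp hG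
  have hF : F = C (c + a * e) := by rw [map_add, map_mul, he, hc]; ring
  exact hFG ⟨by rw [hF, natDegree_C], hG⟩

lemma exists_aeval_eq_mul_aeval {k K : Type*} [Field k] [Field K] [Algebra k K] [IsAlgClosed K]
    {f g : k[X]} (hfg : IsCoprime f g) {ζ : K}
    (hdeg : 0 < (f.map (algebraMap k K) - C ζ * g.map (algebraMap k K)).natDegree) :
    ∃ t : K, aeval t f = ζ * aeval t g ∧ aeval t g ≠ 0 := by
  obtain ⟨t, ht⟩ := IsAlgClosed.exists_root _ (natDegree_pos_iff_degree_pos.mp hdeg).ne'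
  have hft : aeval t f = ζ * aeval t g := by
    rwa [IsRoot.def, eval_sub, eval_mul, eval_C, eval_map_algebraMap, eval_map_algebraMap,
      sub_eq_zero] at ht
  refine ⟨t, hft, fun hgt => ?_⟩
  have := hfg.map (aeval t).toRingHom
  simp [hft, hgt] at this

lemma minpoly_dvd_pow_sub_pow_iff {k K : Type*} [Field k] [Field K] [Algebra k K]
    {f g : k[X]} {t ζ : K} (hft : aeval t f = ζ * aeval t g) (hgt : aeval t g ≠ 0) (m : ℕ) :
    minpoly k t ∣ f ^ m - g ^ m ↔ ζ ^ m = 1 := by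
  rw [minpoly.dvd_iff, map_sub, map_pow, map_pow, hft, mul_pow, sub_eq_zero,
    mul_eq_right₀ (pow_ne_zero m hgt)]

theorem exists_irreducible_dvd_pow_sub_pow_iff {k K : Type*} [Field k] [Field K] [Algebra k K]
    [IsAlgClosed K] [Algebra.IsIntegral k K] {f g : k[X]} (hfg : IsCoprime f g)
    (hconst : ¬(f.natDegree = 0 ∧ g.natDegree = 0)) {ζ : K} (hζ : ζ⁻¹ ≠ ζ) :
    ∃ π : k[X], Irreducible π ∧ ∀ m : ℕ, π ∣ f ^ m - g ^ m ↔ ζ ^ m = 1 := by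
  have hconst' : ¬((f.map (algebraMap k K)).natDegree = 0 ∧
      (g.map (algebraMap k K)).natDegree = 0) := by
    simpa only [natDegree_map] using hconst
  obtain ⟨ξ, hξm, hξ⟩ : ∃ ξ : K, (∀ m : ℕ, ξ ^ m = 1 ↔ ζ ^ m = 1) ∧
      0 < (f.map (algebraMap k K) - C ξ * g.map (algebraMap k K)).natDegree := by
    rcases natDegree_sub_C_mul_pos_or hconst' hζ with h | h
    · exact ⟨ζ⁻¹, fun m => by rw [inv_pow, inv_eq_one], h⟩
    · exact ⟨ζ, fun m => Iff.rfl, h⟩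
  obtain ⟨t, hft, hgt⟩ := exists_aeval_eq_mul_aeval hfg hξ
  refine ⟨minpoly k t, minpoly.irreducible (Algebra.IsIntegral.isIntegral t), fun m => ?_⟩
  rw [minpoly_dvd_pow_sub_pow_iff hft hgt, hξm]

theorem stmt_5_general {k : Type*} [Field k] [CharZero k]
    (f g : Polynomial k) (hfg : IsCoprime f g)
    (hconst : ¬ (f.natDegree = 0 ∧ g.natDegree = 0)) :
    ∀ n : ℕ, 2 < n →
      ∃ π : Polynomial k, Irreducible π ∧ π ∣ f ^ n - g ^ n ∧
        ∀ m : ℕ, 1 ≤ m → m < n → ¬ π ∣ f ^ m - g ^ m := by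
  intro n hn
  have : NeZero (n : k) := ⟨Nat.cast_ne_zero.mpr (by omega)⟩
  obtain ⟨ζ, hζ⟩ := HasEnoughRootsOfUnity.exists_primitiveRoot (AlgebraicClosure k) n
  have hζinv : ζ⁻¹ ≠ ζ := by
    intro h
    refine hζ.pow_ne_one_of_pos_of_lt two_ne_zero hn ?_
    rw [sq]
    nth_rw 1 [← h]
    exact inv_mul_cancel₀ (hζ.ne_zero (by omega))
  obtain ⟨π, hπ, hdvd⟩ := exists_irreducible_dvd_pow_sub_pow_iff hfg hconst hζinv
  refine ⟨π, hπ, (hdvd n).mpr hζ.pow_eq_one, fun m hm hmn => ?_⟩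
  rw [hdvd]
  exact hζ.pow_ne_one_of_pos_of_lt (by omega) hmn

/-- Theorem 1.3 (characteristic zero): for `n > 2`, the polynomial `f^n - g^n`
has a primitive prime divisor. -/
theorem stmt_5 {k : Type*} [Field k] [CharZero k]
    (f g : Polynomial k) (hf : f ≠ 0) (hg : g ≠ 0) (hfg : IsCoprime f g)
    (hconst : ¬ (f.natDegree = 0 ∧ g.natDegree = 0)) :
    ∀ n : ℕ, 2 < n →
      ∃ π : Polynomial k, Irreducible π ∧ π ∣ f ^ n - g ^ n ∧
        ∀ m : ℕ, 1 ≤ m → m < n → ¬ π ∣ f ^ m - g ^ m :=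
  stmt_5_general f g hfg hconst
end

section
/- Let k be a field of characteristic zero and let f, g ∈ k[T] be non-zero coprime polynomials. If π ∈ k[T] is an irreducible polynomial which divides f_n = f^n - g^n and also divides f_m = f^m - g^m for some 1 ≤ m < n (i.e., π is a non-primitive prime divisor of f_n), then π does not divide Φ_n(f, g). -/
/-!
Modulo `π` the ratio `ζ = f / g` makes sense, since `π ∤ g` by coprimality. In the residue
field `k[T]/(π)`, which has characteristic zero, `π ∣ Φ_n(f, g)` says that `ζ` is a root of
`Φ_n`, hence a primitive `n`-th root of unity, while `π ∣ f^m - g^m` says that `ζ^m = 1`.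
So `n ∣ m`, which is impossible for `0 < m < n`.
-/

open Polynomial

theorem IsCoprime.not_dvd_right_of_dvd_pow_sub_pow_s6 {R : Type*} [CommRing R] {f g π : R}
    (hfg : IsCoprime f g) (hπ : Prime π) {m : ℕ} (hm : m ≠ 0) (h : π ∣ f ^ m - g ^ m) :
    ¬ π ∣ g := by
  intro hπg
  have hπf : π ∣ f := hπ.dvd_of_dvd_pow (n := m) (by simpa using dvd_add h (dvd_pow hπg hm))
  exact hπ.not_isUnit (hfg.isUnit_of_dvd' hπf hπg)

theorem AlgHom.map_sum_C_coeff_mul_pow_mul_pow {k K : Type*} [CommRing k] [Field K]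
    [Algebra k K] (φ : k[X] →ₐ[k] K) {p : k[X]} {d : ℕ} (hd : p.natDegree ≤ d) (f g : k[X])
    (hg : φ g ≠ 0) :
    φ (∑ i ∈ Finset.range (d + 1), C (p.coeff i) * f ^ i * g ^ (d - i)) =
      aeval (φ f / φ g) p * φ g ^ d := by
  rw [aeval_eq_sum_range' (Nat.lt_succ_of_le hd), Finset.sum_mul, map_sum]
  refine Finset.sum_congr rfl fun i hi => ?_
  have hid : i ≤ d := Nat.lt_succ_iff.mp (Finset.mem_range.mp hi)
  rw [map_mul, map_mul, map_pow, map_pow, ← algebraMap_eq, φ.commutes, Algebra.smul_def,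
    div_pow, ← pow_mul_pow_sub (φ g) hid]
  field_simp

theorem Polynomial.aeval_cyclotomic_eq_zero_iff {k K : Type*} [CommRing k] [CommRing K]
    [IsDomain K] [Algebra k K] {n : ℕ} [NeZero (n : K)] {ζ : K} :
    aeval ζ (cyclotomic n k) = 0 ↔ IsPrimitiveRoot ζ n := by
  rw [aeval_def, eval₂_eq_eval_map, map_cyclotomic, ← IsRoot.def, isRoot_cyclotomic_iff]

theorem stmt_6_general {k : Type*} [Field k] [CharZero k]
    (f g : Polynomial k) (hfg : IsCoprime f g)
    (π : Polynomial k) (hπ : Irreducible π)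
    (n : ℕ)
    (m : ℕ) (hm1 : 1 ≤ m) (hmn : m < n) (hdvdm : π ∣ f ^ m - g ^ m) :
    ¬ π ∣ (∑ i ∈ Finset.range (n.totient + 1),
        Polynomial.C ((Polynomial.cyclotomic n k).coeff i) * f ^ i * g ^ (n.totient - i)) := by
  have := Fact.mk hπ
  intro hΦ
  set φ := AdjoinRoot.mkₐ π
  have hg : φ g ≠ 0 := by
    simpa [φ, AdjoinRoot.mk_eq_zero] using
      hfg.not_dvd_right_of_dvd_pow_sub_pow_s6 hπ.prime (by omega) hdvdm
  set ζ := φ f / φ g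
  have hζm : ζ ^ m = 1 := by
    have hfg_m : φ f ^ m = φ g ^ m := by
      simpa [φ, sub_eq_zero] using AdjoinRoot.mk_eq_zero.mpr hdvdm
    rw [div_pow, hfg_m, div_self (pow_ne_zero _ hg)]
  have hroot : aeval ζ (cyclotomic n k) = 0 := by
    have h := φ.map_sum_C_coeff_mul_pow_mul_pow (natDegree_cyclotomic n k).le f g hg
    rw [show φ _ = 0 from AdjoinRoot.mk_eq_zero.mpr hΦ] at h
    exact (mul_eq_zero.mp h.symm).resolve_right (pow_ne_zero _ hg)
  have : CharZero (AdjoinRoot π) := charZero_of_injective_algebraMap (algebraMap k _).injective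
  have : NeZero (n : AdjoinRoot π) := ⟨by exact_mod_cast (by omega : n ≠ 0)⟩
  have hnm : n ∣ m := (aeval_cyclotomic_eq_zero_iff.mp hroot).dvd_of_pow_eq_one m hζm
  exact absurd (Nat.le_of_dvd (by omega) hnm) (by omega)

/-- In characteristic zero, a non-primitive prime divisor of `f^n - g^n` does not
divide the homogenized `n`-th cyclotomic polynomial evaluated at `(f, g)`. -/
theorem stmt_6 {k : Type*} [Field k] [CharZero k]
    (f g : Polynomial k) (hf : f ≠ 0) (hg : g ≠ 0) (hfg : IsCoprime f g)
    (π : Polynomial k) (hπ : Irreducible π)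
    (n : ℕ) (hn : 1 ≤ n) (hdvd : π ∣ f ^ n - g ^ n)
    (m : ℕ) (hm1 : 1 ≤ m) (hmn : m < n) (hdvdm : π ∣ f ^ m - g ^ m) :
    ¬ π ∣ (∑ i ∈ Finset.range (n.totient + 1),
        Polynomial.C ((Polynomial.cyclotomic n k).coeff i) * f ^ i * g ^ (n.totient - i)) :=
  stmt_6_general f g hfg π hπ n m hm1 hmn hdvdm
end

section
/- Let f, g ∈ k[T] be non-zero coprime polynomials, not both constant, and suppose deg(f) ≠ deg(g). Then for every n ≥ 1, the degree of Φ_n(f, g) equals φ(n) · max{deg(f), deg(g)}, where φ is Euler's totient function. -/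
open Polynomial

/-- If `deg f ≠ deg g`, then the homogenized `n`-th cyclotomic polynomial evaluated
at `(f, g)` has degree `φ(n) * max (deg f) (deg g)`. -/
theorem stmt_8 {k : Type*} [Field k]
    (f g : Polynomial k) (hf : f ≠ 0) (hg : g ≠ 0) (hfg : IsCoprime f g)
    (hconst : ¬ (f.natDegree = 0 ∧ g.natDegree = 0))
    (hdeg : f.natDegree ≠ g.natDegree) :
    ∀ n : ℕ, 1 ≤ n →
      (∑ i ∈ Finset.range (n.totient + 1),
          Polynomial.C ((Polynomial.cyclotomic n k).coeff i) * f ^ i * g ^ (n.totient - i)).natDegree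
        = n.totient * max f.natDegree g.natDegree := by
  intro n hn
  set N := n.totient with hN
  have hNpos : 0 < N := Nat.totient_pos.mpr hn
  set P := Polynomial.cyclotomic n k with hP
  have hPdeg : P.natDegree = N := Polynomial.natDegree_cyclotomic n k
  rcases Nat.lt_or_ge f.natDegree g.natDegree with h | h'
  · -- deg g > deg f
    have hmax : max f.natDegree g.natDegree = g.natDegree := max_eq_right h.le
    have hc0 : P.coeff 0 ≠ 0 := by
      rcases eq_or_lt_of_le hn with h1 | h2
      · rw [hP, ← h1, Polynomial.cyclotomic_one]
        simp
      · rw [hP, Polynomial.cyclotomic_coeff_zero k h2]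
        exact one_ne_zero
    rw [Finset.sum_range_succ']
    have h0 : (Polynomial.C (P.coeff 0) * f ^ 0 * g ^ (N - 0)).natDegree
        = N * g.natDegree := by
      simp [Polynomial.natDegree_C_mul hc0, Polynomial.natDegree_pow]
    have hsum : (∑ i ∈ Finset.range N,
        Polynomial.C (P.coeff (i + 1)) * f ^ (i + 1) * g ^ (N - (i + 1))).natDegree
        < N * g.natDegree := by
      have hpos : 0 < N * g.natDegree := Nat.mul_pos hNpos (by omega)
      refine lt_of_le_of_lt (Polynomial.natDegree_sum_le_of_forall_le _ _ ?_) (by omega : N * g.natDegree - 1 < N * g.natDegree)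
      intro i hi
      rw [Finset.mem_range] at hi
      have hb : (Polynomial.C (P.coeff (i + 1)) * f ^ (i + 1) * g ^ (N - (i + 1))).natDegree
          ≤ (i + 1) * f.natDegree + (N - (i + 1)) * g.natDegree := by
        refine le_trans (Polynomial.natDegree_mul_le) ?_
        refine add_le_add (le_trans (Polynomial.natDegree_mul_le) ?_) (Polynomial.natDegree_pow_le)
        simp [Polynomial.natDegree_pow_le]
      have h1 : (i + 1) * f.natDegree < (i + 1) * g.natDegree :=
        mul_lt_mul_of_pos_left h (by omega)
      have h2 : (i + 1) * g.natDegree + (N - (i + 1)) * g.natDegree = N * g.natDegree := by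
        rw [← add_mul]; congr 1; omega
      omega
    rw [Polynomial.natDegree_add_eq_right_of_natDegree_lt (by rw [h0]; exact hsum), h0, hmax]
  · have h : g.natDegree < f.natDegree := lt_of_le_of_ne h' (Ne.symm hdeg)
    have hmax : max f.natDegree g.natDegree = f.natDegree := max_eq_left h.le
    rw [Finset.sum_range_succ]
    have hlast : Polynomial.C (P.coeff N) * f ^ N * g ^ (N - N) = f ^ N := by
      have : P.coeff N = 1 := by
        rw [← hPdeg]; exact (Polynomial.cyclotomic.monic n k).coeff_natDegree
      simp [this]
    have hfN : (f ^ N).natDegree = N * f.natDegree := by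
      rw [Polynomial.natDegree_pow]
    have hsum : (∑ i ∈ Finset.range N,
        Polynomial.C (P.coeff i) * f ^ i * g ^ (N - i)).natDegree < N * f.natDegree := by
      have hpos : 0 < N * f.natDegree := Nat.mul_pos hNpos (by omega)
      refine lt_of_le_of_lt (Polynomial.natDegree_sum_le_of_forall_le _ _ ?_) (by omega : N * f.natDegree - 1 < N * f.natDegree)
      intro i hi
      rw [Finset.mem_range] at hi
      have hb : (Polynomial.C (P.coeff i) * f ^ i * g ^ (N - i)).natDegree
          ≤ i * f.natDegree + (N - i) * g.natDegree := by
        refine le_trans (Polynomial.natDegree_mul_le) ?_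
        refine add_le_add (le_trans (Polynomial.natDegree_mul_le) ?_) (Polynomial.natDegree_pow_le)
        simp [Polynomial.natDegree_pow_le]
      have h1 : (N - i) * g.natDegree < (N - i) * f.natDegree :=
        mul_lt_mul_of_pos_left h (by omega)
      have h2 : i * f.natDegree + (N - i) * f.natDegree = N * f.natDegree := by
        rw [← add_mul]; congr 1; omega
      omega
    rw [hlast, Polynomial.natDegree_add_eq_right_of_natDegree_lt (by rw [hfN]; exact hsum), hfN, hmax]
end

section
/- Let k be a field of positive characteristic p (p = 2 allowed) and let f ∈ k[T] be a non-zero non-unit. Then for every n ≥ 2 with p ∤ n, the polynomial h_n = f^n - 1 has a primitive prime divisor: there exists an irreducible π ∈ k[T] with π ∣ h_n and π ∤ h_m for all 1 ≤ m < n. -/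
/-- Corollary 1.5: in characteristic `p > 0` (including `p = 2`), for `n ≥ 2` with
`p ∤ n` the polynomial `f^n - 1` has a primitive prime divisor. -/
theorem stmt_11 {k : Type*} [Field k] (p : ℕ) (hp : p.Prime) [CharP k p]
    (f : Polynomial k) (hf : f ≠ 0) (hu : ¬ IsUnit f) :
    ∀ n : ℕ, 2 ≤ n → ¬ p ∣ n →
      ∃ π : Polynomial k, Irreducible π ∧ π ∣ f ^ n - 1 ∧
        ∀ m : ℕ, 1 ≤ m → m < n → ¬ π ∣ f ^ m - 1 := by
  intro n hn hpn
  have hn0 : 0 < n := lt_of_lt_of_le two_pos hn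
  -- the candidate polynomial
  set Φ : Polynomial k := (Polynomial.cyclotomic n k).comp f with hΦ
  have hfdeg : 0 < f.natDegree :=
    Polynomial.natDegree_pos_iff_degree_pos.mpr
      (Polynomial.degree_pos_of_ne_zero_of_nonunit hf hu)
  have hΦdeg : 0 < Φ.natDegree := by
    rw [hΦ, Polynomial.natDegree_comp, Polynomial.natDegree_cyclotomic]
    exact Nat.mul_pos (Nat.totient_pos.mpr hn0) hfdeg
  have hΦ0 : Φ ≠ 0 := fun h => by simp [h] at hΦdeg
  have hΦu : ¬ IsUnit Φ := Polynomial.not_isUnit_of_natDegree_pos _ hΦdeg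
  obtain ⟨π, hπirr, hπdvd⟩ := WfDvdMonoid.exists_irreducible_factor hΦu hΦ0
  -- π divides f^n - 1
  have hdvd_n : π ∣ f ^ n - 1 := by
    refine hπdvd.trans ?_
    obtain ⟨q, hq⟩ := Polynomial.cyclotomic.dvd_X_pow_sub_one n k
    exact ⟨q.comp f, by
      have : ((Polynomial.X ^ n - 1 : Polynomial k)).comp f =
          (Polynomial.cyclotomic n k).comp f * q.comp f := by
        rw [hq, Polynomial.mul_comp]
      simpa [Polynomial.sub_comp, Polynomial.pow_comp] using this⟩
  -- pass to the residue domain K = k[T]/(π)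
  haveI : (Ideal.span {π}).IsMaximal :=
    PrincipalIdealRing.isMaximal_of_irreducible hπirr
  set K := Polynomial k ⧸ Ideal.span {π} with hK
  let ψ : Polynomial k →+* K := Ideal.Quotient.mk (Ideal.span {π})
  haveI : CharP K p := charP_of_injective_ringHom
    ((ψ.comp Polynomial.C).injective) p
  haveI : NeZero (n : K) := ⟨fun h => hpn ((CharP.cast_eq_zero_iff K p n).mp h)⟩
  set a : K := ψ f with ha
  -- a is a root of cyclotomic n K
  have hroot : (Polynomial.cyclotomic n K).IsRoot a := by
    have h0 : ψ Φ = 0 := (Ideal.Quotient.eq_zero_iff_dvd _ _).mpr hπdvd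
    have h1 : ψ Φ = Polynomial.eval₂ (ψ.comp Polynomial.C) a (Polynomial.cyclotomic n k) := by
      rw [hΦ, Polynomial.comp, Polynomial.hom_eval₂]
    rw [h1] at h0
    have h2 : Polynomial.eval₂ (ψ.comp Polynomial.C) a (Polynomial.cyclotomic n k) =
        (Polynomial.map (ψ.comp Polynomial.C) (Polynomial.cyclotomic n k)).eval a :=
      (Polynomial.eval_map _ _).symm
    rw [h2, Polynomial.map_cyclotomic] at h0
    exact h0
  have hprim : IsPrimitiveRoot a n := Polynomial.isRoot_cyclotomic_iff.mp hroot
  refine ⟨π, hπirr, hdvd_n, ?_⟩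
  intro m hm1 hmn hdvd_m
  have h3 : ψ (f ^ m - 1) = 0 := (Ideal.Quotient.eq_zero_iff_dvd _ _).mpr hdvd_m
  have ham : a ^ m = 1 := by
    have h4 : ψ (f ^ m) - ψ 1 = 0 := by rw [← map_sub]; exact h3
    have h5 := sub_eq_zero.mp h4
    rw [map_pow, map_one] at h5
    exact h5
  exact absurd (Nat.le_of_dvd hm1 (hprim.dvd_of_pow_eq_one m ham)) (not_le.mpr hmn)
end

section
/- For every n ≥ 1, the polynomials P·P_σ and L_n are coprime in K[T]. -/
lemma aux_cop {R : Type*} [CommRing R] (A B : R) (h : IsCoprime A B) (n : ℕ) (hn : 1 ≤ n) :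
    IsCoprime A (∑ i ∈ Finset.range n, A ^ i * B ^ (n - 1 - i)) := by
  obtain ⟨m, rfl⟩ : ∃ m, n = m + 1 := ⟨n - 1, by omega⟩
  have hrw : ∑ i ∈ Finset.range (m + 1), A ^ i * B ^ (m + 1 - 1 - i)
      = B ^ m + A * ∑ i ∈ Finset.range m, A ^ i * B ^ (m - 1 - i) := by
    rw [Finset.sum_range_succ']
    rw [Finset.mul_sum]
    simp only [pow_zero, one_mul, Nat.add_sub_cancel]
    rw [add_comm]
    congr 1
    apply Finset.sum_congr rfl
    intro i hi
    have : m - (i + 1) = m - 1 - i := by omega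
    rw [this, pow_succ]
    ring
  rw [hrw]
  exact (h.pow_right).add_mul_left_right _

/-- Lemma 2.1: `P * P_σ` and `L_n` are coprime for all `n ≥ 1`. -/
theorem stmt_12 {K : Type*} [Field K] (σ : K ≃+* K) (hσ : ∀ x, σ (σ x) = x)
    (P : Polynomial K) (hP : P ≠ 0)
    (Pσ : Polynomial K) (hPσ : Pσ = P.map (σ : K →+* K))
    (hne : P ≠ Pσ) (hcop : IsCoprime (P + Pσ) (P * Pσ))
    (L : ℕ → Polynomial K)
    (hL : ∀ n, L n = ∑ i ∈ Finset.range n, P ^ i * Pσ ^ (n - 1 - i)) :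
    ∀ n : ℕ, 1 ≤ n → IsCoprime (P * Pσ) (L n) := by
  have h1 : IsCoprime P Pσ := by
    obtain ⟨a, b, hab⟩ := hcop
    exact ⟨a, a + b * P, by linear_combination hab⟩
  intro n hn
  rw [hL]
  have c1 : IsCoprime P (∑ i ∈ Finset.range n, P ^ i * Pσ ^ (n - 1 - i)) :=
    aux_cop P Pσ h1 n hn
  have hflip : (∑ i ∈ Finset.range n, P ^ i * Pσ ^ (n - 1 - i))
      = ∑ i ∈ Finset.range n, Pσ ^ i * P ^ (n - 1 - i) := by
    rw [← Finset.sum_range_reflect (fun i => Pσ ^ i * P ^ (n - 1 - i)) n]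
    apply Finset.sum_congr rfl
    intro i hi
    simp only [Finset.mem_range] at hi
    have : n - 1 - (n - 1 - i) = i := by omega
    rw [this, mul_comm]
  have c2 : IsCoprime Pσ (∑ i ∈ Finset.range n, P ^ i * Pσ ^ (n - 1 - i)) := by
    rw [hflip]
    exact aux_cop Pσ P h1.symm n hn
  exact c1.mul_left c2
end

section
/- Assume in addition that the characteristic of K is not 2. Then the sequence (L_n) is a strong divisibility sequence: for all m, n ≥ 1, gcd(L_m, L_n) is associated (equal up to a unit of K) to L_{gcd(m,n)} in K[T]. -/
open scoped Classical

/-- Lemma 2.2: in characteristic different from 2, the Lucas sequence `(L_n)` is a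
strong divisibility sequence. -/
theorem stmt_13 {K : Type*} [Field K] (hchar : ringChar K ≠ 2)
    (σ : K ≃+* K) (hσ : ∀ x, σ (σ x) = x)
    (P : Polynomial K) (hP : P ≠ 0)
    (Pσ : Polynomial K) (hPσ : Pσ = P.map (σ : K →+* K))
    (hne : P ≠ Pσ) (hcop : IsCoprime (P + Pσ) (P * Pσ))
    (L : ℕ → Polynomial K)
    (hL : ∀ n, L n = ∑ i ∈ Finset.range n, P ^ i * Pσ ^ (n - 1 - i)) :
    ∀ m n : ℕ, 1 ≤ m → 1 ≤ n →
      Associated (EuclideanDomain.gcd (L m) (L n)) (L (Nat.gcd m n)) := by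
  have hDne : P - Pσ ≠ 0 := sub_ne_zero.mpr hne
  have hL0 : L 0 = 0 := by simp [hL]
  have hL1 : L 1 = 1 := by simp [hL]
  have hrec : ∀ k, L (k + 1) = P * L k + Pσ ^ k := by
    intro k
    rw [hL, hL, Finset.sum_range_succ', Finset.mul_sum]
    congr 1
    · refine Finset.sum_congr rfl fun i hi => ?_
      have h1 : k + 1 - 1 - (i + 1) = k - 1 - i := by omega
      rw [h1, pow_succ']
      ring
    · simp
  have hDL : ∀ k, (P - Pσ) * L k = P ^ k - Pσ ^ k := by
    intro k
    induction k with
    | zero => simp [hL0]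
    | succ k ih =>
      rw [hrec]
      linear_combination P * ih
  have hrec2 : ∀ k, L (k + 1) = Pσ * L k + P ^ k := by
    intro k
    apply mul_left_cancel₀ hDne
    linear_combination hDL (k + 1) - Pσ * hDL k
  have haddf : ∀ a b, L (a + b + 1) =
      L (a + 1) * L (b + 1) - (P * Pσ) * L a * L b := by
    intro a b
    apply mul_left_cancel₀ (mul_ne_zero hDne hDne)
    have p1 : ((P - Pσ) * L (a + 1)) * ((P - Pσ) * L (b + 1)) =
        (P ^ (a + 1) - Pσ ^ (a + 1)) * (P ^ (b + 1) - Pσ ^ (b + 1)) := by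
      rw [hDL, hDL]
    have p2 : ((P - Pσ) * L a) * ((P - Pσ) * L b) =
        (P ^ a - Pσ ^ a) * (P ^ b - Pσ ^ b) := by
      rw [hDL, hDL]
    linear_combination (P - Pσ) * hDL (a + b + 1) - p1 + (P * Pσ) * p2
  have cP : IsCoprime Pσ P := by
    have h1 : IsCoprime (P + Pσ) P := hcop.of_isCoprime_of_dvd_right (dvd_mul_right P Pσ)
    have h2 := h1.add_mul_left_left (-1)
    have h3 : P + Pσ + P * (-1) = Pσ := by ring
    rwa [h3] at h2
  have hcopP : ∀ k, IsCoprime (L (k + 1)) P := by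
    intro k
    rw [hrec k, add_comm]
    exact (cP.pow_left).add_mul_left_left (L k)
  have hcopPσ : ∀ k, IsCoprime (L (k + 1)) Pσ := by
    intro k
    rw [hrec2 k, add_comm]
    exact (cP.symm.pow_left).add_mul_left_left (L k)
  have hcopQ : ∀ k, IsCoprime (L (k + 1)) (P * Pσ) :=
    fun k => (hcopP k).mul_right (hcopPσ k)
  have hconsec : ∀ k, IsCoprime (L (k + 1)) (L k) := by
    intro k
    cases k with
    | zero => rw [hL1]; exact isCoprime_one_left
    | succ j =>
      rw [hrec (j + 1)]
      have h1 : IsCoprime (Pσ ^ (j + 1)) (L (j + 1)) := ((hcopPσ j).symm).pow_left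
      have h2 := h1.add_mul_right_left P
      rwa [add_comm] at h2
  have hdvd : ∀ a k, L (a + 1) ∣ L ((a + 1) * k) := by
    intro a k
    induction k with
    | zero => simp [hL0]
    | succ k ih =>
      have h1 : (a + 1) * (k + 1) = a + (a + 1) * k + 1 := by ring
      rw [h1, haddf]
      exact dvd_sub (dvd_mul_right _ _) (ih.mul_left _)
  have hstep : ∀ a b, 1 ≤ a → a < b →
      EuclideanDomain.gcd (L a) (L b) ∣ EuclideanDomain.gcd (L a) (L (b - a)) := by
    intro a b ha hab
    obtain ⟨a', rfl⟩ : ∃ a', a = a' + 1 := ⟨a - 1, by omega⟩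
    set c := b - (a' + 1) with hc
    have hb : b = a' + c + 1 := by omega
    have hLb : L b = L (a' + 1) * L (c + 1) - (P * Pσ) * L a' * L c := by
      rw [hb, haddf]
    set d := EuclideanDomain.gcd (L (a' + 1)) (L b) with hd
    have hd1 : d ∣ L (a' + 1) := EuclideanDomain.gcd_dvd_left _ _
    have hd2 : d ∣ L b := EuclideanDomain.gcd_dvd_right _ _
    have hd3 : d ∣ (P * Pσ) * L a' * L c := by
      have h4 : (P * Pσ) * L a' * L c = L (a' + 1) * L (c + 1) - L b := by
        rw [hLb]; ring
      rw [h4]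
      exact dvd_sub (hd1.mul_right _) hd2
    have hcopd : IsCoprime d ((P * Pσ) * L a') :=
      ((hcopQ a').mul_right (hconsec a')).of_isCoprime_of_dvd_left hd1
    have hd4 : d ∣ L c := hcopd.dvd_of_dvd_mul_left hd3
    exact EuclideanDomain.dvd_gcd hd1 hd4
  have key : ∀ s m n, m + n ≤ s → 1 ≤ m → 1 ≤ n →
      EuclideanDomain.gcd (L m) (L n) ∣ L (Nat.gcd m n) := by
    intro s
    induction s with
    | zero => intro m n h hm hn; omega
    | succ N IH =>
      intro m n hs hm hn
      rcases lt_trichotomy m n with hlt | heq | hgt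
      · have h1 := hstep m n hm hlt
        have h2 := IH m (n - m) (by omega) hm (by omega)
        have h3 : Nat.gcd m (n - m) = Nat.gcd m n := Nat.gcd_sub_self_right hlt.le
        rw [← h3]
        exact h1.trans h2
      · subst heq
        rw [Nat.gcd_self]
        exact EuclideanDomain.gcd_dvd_left _ _
      · have hswap : EuclideanDomain.gcd (L m) (L n) ∣ EuclideanDomain.gcd (L n) (L m) :=
          EuclideanDomain.dvd_gcd (EuclideanDomain.gcd_dvd_right _ _)
            (EuclideanDomain.gcd_dvd_left _ _)
        have h1 := hstep n m hn hgt
        have h2 := IH n (m - n) (by omega) hn (by omega)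
        have h3 : Nat.gcd n (m - n) = Nat.gcd m n := by
          rw [Nat.gcd_sub_self_right hgt.le, Nat.gcd_comm]
        rw [← h3]
        exact (hswap.trans h1).trans h2
  intro m n hm hn
  have hgpos : 0 < Nat.gcd m n := Nat.gcd_pos_of_pos_left n hm
  obtain ⟨g', hg'⟩ : ∃ g', Nat.gcd m n = g' + 1 := ⟨Nat.gcd m n - 1, by omega⟩
  obtain ⟨k1, hk1⟩ := Nat.gcd_dvd_left m n
  obtain ⟨k2, hk2⟩ := Nat.gcd_dvd_right m n
  rw [hg'] at hk1 hk2 ⊢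
  have d1 : L (g' + 1) ∣ L m := by rw [hk1]; exact hdvd g' k1
  have d2 : L (g' + 1) ∣ L n := by rw [hk2]; exact hdvd g' k2
  have hk := key (m + n) m n le_rfl hm hn
  rw [hg'] at hk
  exact associated_of_dvd_dvd hk (EuclideanDomain.dvd_gcd d1 d2)
end

section
/- Let the characteristic of K be an odd prime p. Then for every c ≥ 1 one has the identity L_{cp} = (P - P_σ)^{p-1} · L_c^p in K[T]; in particular L_p = (P - P_σ)^{p-1}. -/
/-- Lemma 2.3 (identity): in odd characteristic `p`, `L_{cp} = (P - P_σ)^(p-1) * L_c^p`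
for all `c ≥ 1`; in particular `L_p = (P - P_σ)^(p-1)`. -/
theorem stmt_14 {K : Type*} [Field K] (p : ℕ) (hp : p.Prime) (hodd : Odd p) [CharP K p]
    (σ : K ≃+* K) (hσ : ∀ x, σ (σ x) = x)
    (P : Polynomial K) (hP : P ≠ 0)
    (Pσ : Polynomial K) (hPσ : Pσ = P.map (σ : K →+* K))
    (hne : P ≠ Pσ) (hcop : IsCoprime (P + Pσ) (P * Pσ))
    (L : ℕ → Polynomial K)
    (hL : ∀ n, L n = ∑ i ∈ Finset.range n, P ^ i * Pσ ^ (n - 1 - i)) :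
    (∀ c : ℕ, 1 ≤ c → L (c * p) = (P - Pσ) ^ (p - 1) * (L c) ^ p) ∧
    L p = (P - Pσ) ^ (p - 1) := by
  have hfact : Fact p.Prime := ⟨hp⟩
  have key : ∀ n, L n * (P - Pσ) = P ^ n - Pσ ^ n := by
    intro n; rw [hL]; exact geom_sum₂_mul P Pσ n
  have hsub : P - Pσ ≠ 0 := sub_ne_zero.mpr hne
  have main : ∀ c, L (c * p) = (P - Pσ) ^ (p - 1) * (L c) ^ p := by
    intro c
    apply mul_right_cancel₀ hsub
    rw [key]
    have : P ^ (c * p) - Pσ ^ (c * p) = (L c * (P - Pσ)) ^ p := by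
      rw [key, pow_mul, pow_mul, ← sub_pow_char]
    rw [this, mul_pow]
    have hp1 : (P - Pσ) ^ p = (P - Pσ) ^ (p - 1) * (P - Pσ) := by
      rw [← pow_succ, Nat.sub_add_cancel hp.one_le]
    rw [hp1]; ring
  have hL1 : L 1 = 1 := by simp [hL 1]
  refine ⟨fun c _ => main c, ?_⟩
  have := main 1
  rw [one_mul, hL1, one_pow, mul_one] at this
  exact this
end

section
/- Let the characteristic of K be an odd prime p and let c ≥ 2. Then L_{cp} has no primitive prime divisor: every irreducible π ∈ K[T] dividing L_{cp} divides L_c or L_p, and hence divides L_m for some 1 ≤ m < cp. -/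
/-- Lemma 2.3 (consequence): in odd characteristic `p`, for `c ≥ 2` the term `L_{cp}`
has no primitive prime divisor: every irreducible divisor of `L_{cp}` divides
`L_c` or `L_p`, hence divides some earlier term `L_m` with `1 ≤ m < cp`. -/
theorem stmt_15 {K : Type*} [Field K] (p : ℕ) (hp : p.Prime) (hodd : Odd p) [CharP K p]
    (σ : K ≃+* K) (hσ : ∀ x, σ (σ x) = x)
    (P : Polynomial K) (hP : P ≠ 0)
    (Pσ : Polynomial K) (hPσ : Pσ = P.map (σ : K →+* K))
    (hne : P ≠ Pσ) (hcop : IsCoprime (P + Pσ) (P * Pσ))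
    (L : ℕ → Polynomial K)
    (hL : ∀ n, L n = ∑ i ∈ Finset.range n, P ^ i * Pσ ^ (n - 1 - i))
    (c : ℕ) (hc : 2 ≤ c) :
    (∀ π : Polynomial K, Irreducible π → π ∣ L (c * p) → (π ∣ L c ∨ π ∣ L p)) ∧
    (∀ π : Polynomial K, Irreducible π → π ∣ L (c * p) →
      ∃ m : ℕ, 1 ≤ m ∧ m < c * p ∧ π ∣ L m) := by
  haveI : Fact p.Prime := ⟨hp⟩
  have hD : P - Pσ ≠ 0 := sub_ne_zero_of_ne hne
  have hgeom : ∀ n, L n * (P - Pσ) = P ^ n - Pσ ^ n := by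
    intro n; rw [hL n]; exact geom_sum₂_mul P Pσ n
  -- L p * (P - Pσ) = (P - Pσ)^p
  have hfrob : (P - Pσ) ^ p = P ^ p - Pσ ^ p := sub_pow_char P Pσ
  have hLp : L p * (P - Pσ) = (P - Pσ) ^ p := by rw [hgeom, hfrob]
  have hLcp : L (c * p) * (P - Pσ) = (L c * (P - Pσ)) ^ p := by
    rw [hgeom, hgeom, sub_pow_char (P^c) (Pσ^c), ← pow_mul, ← pow_mul]
  -- key factorization: L (c*p) = L c ^ p * L p
  have hkey : L (c * p) = L c ^ p * L p := by
    have h1 : L (c * p) * (P - Pσ) = (L c ^ p * L p) * (P - Pσ) := by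
      rw [hLcp, mul_pow, mul_comm (L c ^ p) (L p), mul_assoc, ← hLp]
      ring
    exact mul_right_cancel₀ hD h1
  have main : ∀ π : Polynomial K, Irreducible π → π ∣ L (c * p) → (π ∣ L c ∨ π ∣ L p) := by
    intro π hirr hdvd
    rw [hkey] at hdvd
    rcases hirr.prime.dvd_mul.mp hdvd with h | h
    · exact Or.inl (hirr.prime.dvd_of_dvd_pow h)
    · exact Or.inr h
  refine ⟨main, fun π hirr hdvd => ?_⟩
  have hp2 : 2 ≤ p := hp.two_le
  rcases main π hirr hdvd with h | h
  · exact ⟨c, by omega, by nlinarith, h⟩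
  · exact ⟨p, by omega, by nlinarith, h⟩
end

section
/- Assume in addition that the characteristic of K is not 2. Then for every m ≥ 1, the polynomials P^m + P_σ^m and L_m are coprime in K[T]. -/
/-- Lemma 2.4: in characteristic different from 2, `P^m + P_σ^m` and `L_m` are
coprime for all `m ≥ 1`. -/
theorem stmt_16 {K : Type*} [Field K] (hchar : ringChar K ≠ 2)
    (σ : K ≃+* K) (hσ : ∀ x, σ (σ x) = x)
    (P : Polynomial K) (hP : P ≠ 0)
    (Pσ : Polynomial K) (hPσ : Pσ = P.map (σ : K →+* K))
    (hne : P ≠ Pσ) (hcop : IsCoprime (P + Pσ) (P * Pσ))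
    (L : ℕ → Polynomial K)
    (hL : ∀ n, L n = ∑ i ∈ Finset.range n, P ^ i * Pσ ^ (n - 1 - i)) :
    ∀ m : ℕ, 1 ≤ m → IsCoprime (P ^ m + Pσ ^ m) (L m) := by
  intro m hm
  have h2 : (2 : K) ≠ 0 := Ring.two_ne_zero hchar
  -- P and Pσ are coprime
  have hPPσ : IsCoprime P Pσ := by
    have h1 : IsCoprime (P + Pσ) Pσ := hcop.of_mul_right_right
    have h2' : IsCoprime ((P + Pσ) + (-1) * Pσ) Pσ := h1.add_mul_right_left (-1)
    simpa using h2'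
  have hpow : IsCoprime (P ^ m) (Pσ ^ m) := hPPσ.pow
  obtain ⟨u, v, huv⟩ := hpow
  -- key identity
  have hkey : L m * (P - Pσ) = P ^ m - Pσ ^ m := by
    rw [hL]; exact geom_sum₂_mul P Pσ m
  -- coprimality of sum and difference
  have hsd : IsCoprime (P ^ m + Pσ ^ m) (P ^ m - Pσ ^ m) := by
    refine ⟨Polynomial.C (2⁻¹ : K) * (u + v), Polynomial.C (2⁻¹ : K) * (u - v), ?_⟩
    have : Polynomial.C (2⁻¹ : K) * (u + v) * (P ^ m + Pσ ^ m) +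
        Polynomial.C (2⁻¹ : K) * (u - v) * (P ^ m - Pσ ^ m) =
        Polynomial.C (2⁻¹ : K) * (2 * (u * P ^ m + v * Pσ ^ m)) := by ring
    rw [this, huv, mul_one]
    have : (2 : Polynomial K) = Polynomial.C (2 : K) := by
      exact (map_ofNat Polynomial.C 2).symm
    rw [this, ← Polynomial.C_mul, inv_mul_cancel₀ h2, Polynomial.C_1]
  rw [← hkey] at hsd
  exact hsd.of_mul_right_left
end

section
/- Let the characteristic of K be zero. If π ∈ K[T] is an irreducible polynomial dividing L_n, then for every m ≥ 1 one has ord_π(L_{mn}) = ord_π(L_n). -/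
/-!
Write `G_k(x, y) = ∑_{i<k} x^i y^(k-1-i)`, so `L_k = G_k(P, Pσ)`. Then `L_{mn} = L_n · G_m(P^n, Pσ^n)`,
and `π ∣ L_n ∣ P^n - Pσ^n`, so modulo `π` the second factor is `m · (P^n)^(m-1)`. This is prime
to `π`: `m` is a unit in characteristic zero, and `π ∣ P` would force `π ∣ Pσ`, against the
coprimality of `P + Pσ` and `P Pσ`. Hence the second factor adds nothing to the multiplicity.
-/

open Finset

theorem geom_sum₂_mul_eq_geom_sum₂_mul_geom_sum₂_pow {R : Type*} [CommRing R] (x y : R)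
    (m n : ℕ) :
    ∑ i ∈ range (m * n), x ^ i * y ^ (m * n - 1 - i) =
      (∑ i ∈ range n, x ^ i * y ^ (n - 1 - i)) *
        ∑ j ∈ range m, (x ^ n) ^ j * (y ^ n) ^ (m - 1 - j) := by
  -- the identity holds in the domain `ℤ[X, Y]` after multiplying by `X - Y ≠ 0`
  let X : MvPolynomial (Fin 2) ℤ := MvPolynomial.X 0
  let Y : MvPolynomial (Fin 2) ℤ := MvPolynomial.X 1
  have hXY : X - Y ≠ 0 := sub_ne_zero.2 ((MvPolynomial.X_injective (R := ℤ)).ne (by decide))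
  have universal : ∑ i ∈ range (m * n), X ^ i * Y ^ (m * n - 1 - i) =
      (∑ i ∈ range n, X ^ i * Y ^ (n - 1 - i)) *
        ∑ j ∈ range m, (X ^ n) ^ j * (Y ^ n) ^ (m - 1 - j) := by
    refine mul_right_cancel₀ hXY ?_
    rw [geom_sum₂_mul, mul_right_comm, geom_sum₂_mul, mul_comm (X ^ n - Y ^ n), geom_sum₂_mul]
    ring
  simpa [X, Y] using congrArg (MvPolynomial.aeval ![x, y]) universal

theorem multiplicity_mul_of_not_dvd {α : Type*} [CommMonoidWithZero α] [IsCancelMulZero α]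
    {p a b : α} (hp : Prime p) (hb : ¬p ∣ b) : multiplicity p (a * b) = multiplicity p a :=
  multiplicity_eq_of_emultiplicity_eq <| by
    rw [emultiplicity_mul hp, emultiplicity_eq_zero.2 hb, add_zero]

theorem stmt_18_general {K : Type*} [Field K] [CharZero K]
    (P : Polynomial K)
    (Pσ : Polynomial K)
    (hcop : IsCoprime (P + Pσ) (P * Pσ))
    (L : ℕ → Polynomial K)
    (hL : ∀ n, L n = ∑ i ∈ Finset.range n, P ^ i * Pσ ^ (n - 1 - i))
    (π : Polynomial K) (hπ : Irreducible π)
    (n : ℕ) (hdvd : π ∣ L n) :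
    ∀ m : ℕ, 1 ≤ m → multiplicity π (L (m * n)) = multiplicity π (L n) := by
  intro m hm
  have hprime : Prime π := hπ.prime
  have hsub : π ∣ P ^ n - Pσ ^ n := by
    rw [← geom_sum₂_mul, ← hL]
    exact hdvd.mul_right _
  have hPn : ¬π ∣ P ^ n := fun hPn ↦ by
    have hP : π ∣ P := hprime.dvd_of_dvd_pow hPn
    have hPσ : π ∣ Pσ := hprime.dvd_of_dvd_pow ((dvd_sub_right hPn).1 hsub)
    exact hπ.not_isUnit (hcop.isUnit_of_dvd' (dvd_add hP hPσ) (hP.mul_right Pσ))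
  have hm : ¬π ∣ (m : Polynomial K) := fun h ↦ hπ.not_isUnit <| isUnit_of_dvd_unit h <| by
    rw [← Polynomial.C_eq_natCast]
    exact Polynomial.isUnit_C.2 (Nat.cast_ne_zero.2 (by omega)).isUnit
  rw [hL, hL, geom_sum₂_mul_eq_geom_sum₂_mul_geom_sum₂_pow,
    multiplicity_mul_of_not_dvd hprime (not_dvd_geom_sum₂ hprime hsub hPn hm)]

/-- Lemma 2.5 (characteristic zero): if `π` is an irreducible dividing `L_n`, then
for every `m ≥ 1` one has `ord_π (L_{mn}) = ord_π (L_n)`. -/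
theorem stmt_18 {K : Type*} [Field K] [CharZero K]
    (σ : K ≃+* K) (hσ : ∀ x, σ (σ x) = x)
    (P : Polynomial K) (hP : P ≠ 0)
    (Pσ : Polynomial K) (hPσ : Pσ = P.map (σ : K →+* K))
    (hne : P ≠ Pσ) (hcop : IsCoprime (P + Pσ) (P * Pσ))
    (L : ℕ → Polynomial K)
    (hL : ∀ n, L n = ∑ i ∈ Finset.range n, P ^ i * Pσ ^ (n - 1 - i))
    (π : Polynomial K) (hπ : Irreducible π)
    (n : ℕ) (hn : 1 ≤ n) (hdvd : π ∣ L n) :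
    ∀ m : ℕ, 1 ≤ m → multiplicity π (L (m * n)) = multiplicity π (L n) :=
  stmt_18_general P Pσ hcop L hL π hπ n hdvd
end

section
/- Suppose P is non-constant and the characteristic of K is either zero or an odd prime p. Then for every n > 2 (with the additional requirement p ∤ n in positive characteristic), the polynomial L_n has a primitive prime divisor: there exists an irreducible π ∈ K[T] with π ∣ L_n and π ∤ L_m for all 1 ≤ m < n. -/
/-!
Write `Φₙ(x, y)` for the homogenized cyclotomic polynomial. Over an algebraic closure,
`Φₙ(P, Q) = ∏ (P - ζ Q)` over the primitive `n`-th roots of unity `ζ`. As `P` and `Q` are coprime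
and `P` is nonconstant, no factor vanishes and at most one is constant, so for `φ(n) ≥ 2` the
polynomial `Φₙ(P, Q)` has an irreducible factor `π`. Modulo `π`, `Q` is invertible (`Φₙ(P, Q)`
divides `Pⁿ - Qⁿ`) and `P / Q` is a root of `Φₙ`, hence a primitive `n`-th root of unity because
`n` is invertible in `K`. Since `L_m ≡ Q^(m-1) ∑_{i<m} (P / Q)^i`, this gives `π ∣ L_m ↔ n ∣ m`.
-/

open Polynomial Finset

/-- The homogenized cyclotomic polynomial `Φₙ(x, y) = y ^ φ(n) * Φₙ(x / y)`. -/
noncomputable def cyclotomicForm {A : Type*} [CommRing A] (n : ℕ) (x y : A) : A :=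
  MvPolynomial.eval₂ (Int.castRingHom A) ![x, y] ((cyclotomic n ℤ).homogenize n.totient)

section CommRing

variable {A B : Type*} [CommRing A] [CommRing B]

theorem map_cyclotomicForm (g : A →+* B) (n : ℕ) (x y : A) :
    g (cyclotomicForm n x y) = cyclotomicForm n (g x) (g y) := by
  rw [cyclotomicForm, MvPolynomial.eval₂_comp_left, RingHom.ext_int (g.comp _) (Int.castRingHom B)]
  congr 1
  ext i; fin_cases i <;> rfl

theorem cyclotomicForm_eq_eval₂ {R : Type*} [CommRing R] (f : R →+* A) (n : ℕ) (x y : A) :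
    cyclotomicForm n x y =
      MvPolynomial.eval₂ f ![x, y] ((cyclotomic n R).homogenize n.totient) := by
  rw [← map_cyclotomic_int, homogenize_map, MvPolynomial.eval₂_map, cyclotomicForm,
    RingHom.ext_int (f.comp _) (Int.castRingHom A)]

theorem cyclotomicForm_dvd_pow_sub_pow {n : ℕ} (hn : 0 < n) (x y : A) :
    cyclotomicForm n x y ∣ x ^ n - y ^ n := by
  obtain ⟨R, hR⟩ := cyclotomic.dvd_X_pow_sub_one n ℤ
  have hR0 : R ≠ 0 := by
    rintro rfl
    rw [mul_zero] at hR
    exact X_pow_sub_C_ne_zero hn (1 : ℤ) (by simpa using hR)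
  have hdeg : n = n.totient + R.natDegree := by
    have := congrArg natDegree hR
    rwa [natDegree_mul (cyclotomic_ne_zero n ℤ) hR0, natDegree_cyclotomic,
      ← C_1, natDegree_X_pow_sub_C] at this
  have hhom := homogenize_mul _ _ (natDegree_cyclotomic n ℤ).le (le_refl R.natDegree)
  rw [← hR, ← hdeg, homogenize_sub, homogenize_X_pow le_rfl, homogenize_one, Nat.sub_self,
    pow_zero, mul_one] at hhom
  refine ⟨MvPolynomial.eval₂ (Int.castRingHom A) ![x, y] (R.homogenize R.natDegree), ?_⟩
  rw [cyclotomicForm, ← MvPolynomial.eval₂_mul, ← hhom]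
  simp

end CommRing

theorem cyclotomicForm_eq_eval_mul {F : Type*} [Field F] (n : ℕ) (x : F) {y : F} (hy : y ≠ 0) :
    cyclotomicForm n x y = (cyclotomic n F).eval (x / y) * y ^ n.totient := by
  rw [cyclotomicForm_eq_eval₂ (RingHom.id F)]
  exact eval_homogenize (natDegree_cyclotomic n F).le ![x, y] hy

theorem cyclotomicForm_eq_prod {L A : Type*} [Field L] [CommRing A] [Algebra L A] {n : ℕ} {μ : L}
    (hμ : IsPrimitiveRoot μ n) (x y : A) :
    cyclotomicForm n x y = ∏ ζ ∈ primitiveRoots n L, (x - algebraMap L A ζ * y) := by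
  rw [cyclotomicForm_eq_eval₂ (algebraMap L A), cyclotomic_eq_prod_X_sub_primitiveRoots hμ,
    ← hμ.card_primitiveRoots, card_eq_sum_ones, homogenize_finsetProd, MvPolynomial.eval₂_prod]
  · refine prod_congr rfl fun ζ _ => ?_
    simp
  · intro ζ _
    simp

theorem IsPrimitiveRoot.geom_sum₂_eq_zero_iff_dvd {F : Type*} [Field F] {x y : F} {n : ℕ}
    (h : IsPrimitiveRoot (x / y) n) (hn : 1 < n) (m : ℕ) :
    ∑ i ∈ range m, x ^ i * y ^ (m - 1 - i) = 0 ↔ n ∣ m := by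
  have hy : y ≠ 0 := fun hy => h.ne_zero (by omega) (by rw [hy, div_zero])
  have hxy : x - y ≠ 0 := sub_ne_zero.2 fun hxy => h.ne_one hn (by rw [hxy, div_self hy])
  rw [← mul_left_inj' hxy, zero_mul, geom_sum₂_mul, sub_eq_zero, ← h.pow_eq_one_iff_dvd, div_pow,
    div_eq_one_iff_eq (pow_ne_zero m hy)]

namespace Polynomial

variable {K : Type*} [Field K] {P Q : K[X]}

theorem sub_C_mul_ne_zero (hPQ : IsCoprime P Q) (hP : P.natDegree ≠ 0) (ζ : K) :
    P - C ζ * Q ≠ 0 := by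
  intro h
  have hQ : IsUnit Q := hPQ.isUnit_of_dvd' ⟨C ζ, by rw [sub_eq_zero.1 h, mul_comm]⟩ dvd_rfl
  refine hP (Nat.eq_zero_of_le_zero ?_)
  calc P.natDegree = (C ζ * Q).natDegree := by rw [sub_eq_zero.1 h]
    _ ≤ Q.natDegree := natDegree_C_mul_le ζ Q
    _ = 0 := natDegree_eq_zero_of_isUnit hQ

theorem natDegree_eq_zero_of_isUnit_sub_C_mul {ζ₁ ζ₂ : K} (hζ : ζ₁ ≠ ζ₂)
    (h₁ : IsUnit (P - C ζ₁ * Q)) (h₂ : IsUnit (P - C ζ₂ * Q)) : P.natDegree = 0 := by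
  obtain ⟨c₁, hc₁⟩ := natDegree_eq_zero.1 (natDegree_eq_zero_of_isUnit h₁)
  obtain ⟨c₂, hc₂⟩ := natDegree_eq_zero.1 (natDegree_eq_zero_of_isUnit h₂)
  have hζ' : ζ₂ - ζ₁ ≠ 0 := sub_ne_zero.2 hζ.symm
  have hQ : Q = C ((c₁ - c₂) / (ζ₂ - ζ₁)) := by
    refine mul_left_cancel₀ (C_ne_zero.2 hζ') ?_
    rw [← C_mul, mul_div_cancel₀ _ hζ', C_sub, C_sub, hc₁, hc₂]
    ring
  have hP : P = C (c₁ + ζ₁ * ((c₁ - c₂) / (ζ₂ - ζ₁))) := by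
    rw [C_add, C_mul, ← hQ, hc₁]
    ring
  rw [hP, natDegree_C]

variable {n : ℕ} [NeZero (n : K)]

theorem map_algebraicClosure_cyclotomicForm :
    (cyclotomicForm n P Q).map (algebraMap K (AlgebraicClosure K)) =
      ∏ ζ ∈ primitiveRoots n (AlgebraicClosure K),
        (P.map (algebraMap K _) - C ζ * Q.map (algebraMap K _)) := by
  obtain ⟨μ, hμ⟩ := HasEnoughRootsOfUnity.exists_primitiveRoot (AlgebraicClosure K) n
  rw [← coe_mapRingHom, map_cyclotomicForm, cyclotomicForm_eq_prod hμ, algebraMap_eq]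

theorem cyclotomicForm_ne_zero (hPQ : IsCoprime P Q) (hP : P.natDegree ≠ 0) :
    cyclotomicForm n P Q ≠ 0 := by
  intro h
  have h' := congrArg (map (algebraMap K (AlgebraicClosure K))) h
  rw [map_algebraicClosure_cyclotomicForm, Polynomial.map_zero, prod_eq_zero_iff] at h'
  obtain ⟨ζ, -, hζ⟩ := h'
  have hPQ' := hPQ.map (mapRingHom (algebraMap K (AlgebraicClosure K)))
  rw [coe_mapRingHom] at hPQ'
  exact sub_C_mul_ne_zero hPQ' (by rwa [natDegree_map]) ζ hζ

theorem not_isUnit_cyclotomicForm (hP : P.natDegree ≠ 0) (hn : 2 < n) :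
    ¬ IsUnit (cyclotomicForm n P Q) := by
  intro h
  have h' := h.map (mapRingHom (algebraMap K (AlgebraicClosure K)))
  rw [coe_mapRingHom, map_algebraicClosure_cyclotomicForm] at h'
  obtain ⟨μ, hμ⟩ := HasEnoughRootsOfUnity.exists_primitiveRoot (AlgebraicClosure K) n
  have hcard : 1 < (primitiveRoots n (AlgebraicClosure K)).card := by
    rw [hμ.card_primitiveRoots]
    have := Nat.totient_pos.2 (show 0 < n by omega)
    have : n.totient ≠ 1 := fun h => by rcases Nat.totient_eq_one_iff.1 h with h | h <;> omega
    omega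
  obtain ⟨ζ₁, h₁, ζ₂, h₂, hζ⟩ := one_lt_card.1 hcard
  refine hP ?_
  rw [← natDegree_map (algebraMap K (AlgebraicClosure K))]
  have hfactor {ζ} (hζ : ζ ∈ primitiveRoots n (AlgebraicClosure K)) :=
    isUnit_of_dvd_unit (dvd_prod_of_mem (fun ζ => _ - C ζ * _) hζ) h'
  exact natDegree_eq_zero_of_isUnit_sub_C_mul hζ (hfactor h₁) (hfactor h₂)

theorem isPrimitiveRoot_mk_div_mk_of_dvd_cyclotomicForm {π : K[X]} [Fact (Irreducible π)]
    (hPQ : IsCoprime P Q) (hπ : π ∣ cyclotomicForm n P Q) :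
    IsPrimitiveRoot (AdjoinRoot.mk π P / AdjoinRoot.mk π Q) n := by
  have hπ' : Irreducible π := Fact.out
  have hn : n ≠ 0 := (NeZero.of_neZero_natCast K).ne
  have hπQ : ¬ π ∣ Q := by
    intro hQ
    have hpow : π ∣ P ^ n := by
      simpa using dvd_add (hπ.trans (cyclotomicForm_dvd_pow_sub_pow (Nat.pos_of_ne_zero hn) P Q))
        (dvd_pow hQ hn)
    exact hπ'.not_isUnit (hPQ.isUnit_of_dvd' (hπ'.prime.dvd_of_dvd_pow hpow) hQ)
  have hQ : AdjoinRoot.mk π Q ≠ 0 := by rwa [Ne, AdjoinRoot.mk_eq_zero]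
  have : NeZero (n : AdjoinRoot π) := ‹NeZero (n : K)›.of_injective (AdjoinRoot.of π).injective
  rw [← AdjoinRoot.mk_eq_zero, map_cyclotomicForm, cyclotomicForm_eq_eval_mul _ _ hQ,
    mul_eq_zero, or_iff_left (pow_ne_zero _ hQ)] at hπ
  exact isRoot_cyclotomic_iff.1 hπ

theorem dvd_geom_sum₂_iff_of_dvd_cyclotomicForm {π : K[X]} (hπ : Irreducible π)
    (hPQ : IsCoprime P Q) (hn : 1 < n) (hπΦ : π ∣ cyclotomicForm n P Q) (m : ℕ) :
    π ∣ ∑ i ∈ range m, P ^ i * Q ^ (m - 1 - i) ↔ n ∣ m := by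
  have : Fact (Irreducible π) := ⟨hπ⟩
  rw [← AdjoinRoot.mk_eq_zero]
  simp only [map_sum, map_mul, map_pow]
  exact (isPrimitiveRoot_mk_div_mk_of_dvd_cyclotomicForm hPQ hπΦ).geom_sum₂_eq_zero_iff_dvd hn m

end Polynomial

theorem stmt_19_general {K : Type*} [Field K]
    (P : Polynomial K) (hPc : P.natDegree ≠ 0)
    (Pσ : Polynomial K)
    (hcop : IsCoprime (P + Pσ) (P * Pσ))
    (L : ℕ → Polynomial K)
    (hL : ∀ n, L n = ∑ i ∈ Finset.range n, P ^ i * Pσ ^ (n - 1 - i)) :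
    ∀ n : ℕ, 2 < n → ¬ ringChar K ∣ n →
      ∃ π : Polynomial K, Irreducible π ∧ π ∣ L n ∧
        ∀ m : ℕ, 1 ≤ m → m < n → ¬ π ∣ L m := by
  intro n hn hchar
  have : NeZero (n : K) := ⟨by rwa [Ne, ringChar.spec]⟩
  have hPQ : IsCoprime P Pσ := by
    simpa using hcop.of_mul_right_right.add_mul_left_left (-1)
  obtain ⟨π, hπ, hπΦ⟩ := WfDvdMonoid.exists_irreducible_factor
    (not_isUnit_cyclotomicForm hPc hn) (cyclotomicForm_ne_zero hPQ hPc)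
  have hdvd_L (m : ℕ) : π ∣ L m ↔ n ∣ m := by
    rw [hL]
    exact dvd_geom_sum₂_iff_of_dvd_cyclotomicForm hπ hPQ (by omega) hπΦ m
  refine ⟨π, hπ, (hdvd_L n).2 dvd_rfl, fun m hm hmn h => ?_⟩
  exact absurd (Nat.le_of_dvd hm ((hdvd_L m).1 h)) (by omega)

/-- Theorem 2.6: if `P` is non-constant and the characteristic of `K` is zero or an
odd prime, then for every `n > 2` (not divisible by the characteristic in positive
characteristic) the term `L_n` has a primitive prime divisor. -/
theorem stmt_19 {K : Type*} [Field K]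
    (hchar : ringChar K = 0 ∨ (Nat.Prime (ringChar K) ∧ Odd (ringChar K)))
    (σ : K ≃+* K) (hσ : ∀ x, σ (σ x) = x)
    (P : Polynomial K) (hP : P ≠ 0) (hPc : P.natDegree ≠ 0)
    (Pσ : Polynomial K) (hPσ : Pσ = P.map (σ : K →+* K))
    (hne : P ≠ Pσ) (hcop : IsCoprime (P + Pσ) (P * Pσ))
    (L : ℕ → Polynomial K)
    (hL : ∀ n, L n = ∑ i ∈ Finset.range n, P ^ i * Pσ ^ (n - 1 - i)) :
    ∀ n : ℕ, 2 < n → ¬ ringChar K ∣ n →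
      ∃ π : Polynomial K, Irreducible π ∧ π ∣ L n ∧
        ∀ m : ℕ, 1 ≤ m → m < n → ¬ π ∣ L m :=
  stmt_19_general P hPc Pσ hcop L hL
end
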